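/- arXiv:2105.11317 — 3 statements merged into one kernel-verified Lean document; each statement's English description precedes it below -/
import Mathlib

section
/- Let G be a finite connected graph and t ≥ 1. Let d and D be the minimum and maximum, respectively, of γ_{t,1}(Ḡ) over all orientations Ḡ of G. Then for every integer b with d ≤ b ≤ D, there exists an orientation Ḡ_b of G with γ_{t,1}(Ḡ_b) = b. -/
open Finset

/-- `DReach A n u v`: there is a directed walk of length `n` from `u` to `v`
in the digraph with arc relation `A`. -/
def DReach {V : Type*} (A : V → V → Prop) : ℕ → V → V → Prop
  | 0, u, v => u = v
  | n + 1, u, v => ∃ w, A u w ∧ DReach A n w v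

/-- The signal a broadcasting vertex `u` of strength `t` sends to `w`:
`t - d(u,w)` where `d` is the directed distance (0 if `d(u,w) ≥ t` or `w` unreachable). -/
noncomputable def dsignal {V : Type*} (A : V → V → Prop) (t : ℕ) (u w : V) : ℕ :=
  sSup {m : ℕ | ∃ n : ℕ, DReach A n u w ∧ m = t - n}

/-- The directed reception at `w` from the broadcast set `S` of strength `t`. -/
noncomputable def dreception {V : Type*} [Fintype V] (A : V → V → Prop) (t : ℕ)
    (S : Finset V) (w : V) : ℕ :=
  ∑ v ∈ S, dsignal A t v w

/-- `S` is a directed `(t,r)` broadcast dominating set of the digraph `A`. -/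
def IsDomSet {V : Type*} [Fintype V] (A : V → V → Prop) (t r : ℕ) (S : Finset V) : Prop :=
  ∀ w : V, r ≤ dreception A t S w

/-- The directed `(t,r)` broadcast domination number of the digraph `A`. -/
noncomputable def gamma {V : Type*} [Fintype V] (A : V → V → Prop) (t r : ℕ) : ℕ :=
  sInf {k : ℕ | ∃ S : Finset V, IsDomSet A t r S ∧ S.card = k}

/-- `A` is an orientation of the simple graph `G`: every arc is along an edge of `G`,
and each edge of `G` is directed in exactly one of the two directions. -/
def IsOrientation {V : Type*} (G : SimpleGraph V) (A : V → V → Prop) : Prop :=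
  (∀ u v, A u v → G.Adj u v) ∧ ∀ u v, G.Adj u v → (A u v ↔ ¬ A v u)

/-- `A₁` is obtained from `A₀` by reversing (flipping) a single arc. -/
def OneFlip {V : Type*} (A₀ A₁ : V → V → Prop) : Prop :=
  ∃ a b, A₀ a b ∧ A₁ b a ∧
    ∀ u v, ¬((u = a ∧ v = b) ∨ (u = b ∧ v = a)) → (A₀ u v ↔ A₁ u v)

/-- The star graph on `n` vertices: vertex with value `0` is the center. -/
def starGraph (n : ℕ) : SimpleGraph (Fin n) where
  Adj u v := u ≠ v ∧ (u.val = 0 ∨ v.val = 0)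
  symm := by constructor; intro u v h; exact ⟨h.1.symm, h.2.symm⟩
  loopless := by constructor; intro u h; exact h.1 rfl

open Finset

/-!
Reversing one arc `a → c` raises `γ_{t,1}` by at most one: every walk that used the arc has a
shorter tail starting at `c`, so adding `c` to a dominating set keeps it dominating. Any two
orientations of `G` are joined by a sequence of single reversals, each moving closer to the
target, so along such a sequence from a minimising to a maximising orientation the domination
number takes every intermediate value.
-/

section Signal

variable {V : Type*} {A : V → V → Prop} {t : ℕ} {u w : V}

lemma dsignal_bddAbove (A : V → V → Prop) (t : ℕ) (u w : V) :
    BddAbove {m : ℕ | ∃ n : ℕ, DReach A n u w ∧ m = t - n} :=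
  ⟨t, by rintro m ⟨n, -, rfl⟩; exact Nat.sub_le t n⟩

lemma dsignal_pos_iff : 0 < dsignal A t u w ↔ ∃ n < t, DReach A n u w := by
  constructor
  · intro h
    rcases Set.eq_empty_or_nonempty {m : ℕ | ∃ n : ℕ, DReach A n u w ∧ m = t - n}
      with hempty | hne
    · simp [dsignal, hempty] at h
    · obtain ⟨n, hn, hm⟩ := Nat.sSup_mem hne (dsignal_bddAbove A t u w)
      rw [dsignal, hm] at h
      exact ⟨n, by omega, hn⟩
  · rintro ⟨n, hnt, hn⟩
    exact lt_of_lt_of_le (by omega) (le_csSup (dsignal_bddAbove A t u w) ⟨n, hn, rfl⟩)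

end Signal

section Domination

variable {V : Type*} [Fintype V] {A : V → V → Prop} {t : ℕ}

lemma isDomSet_one_iff {S : Finset V} :
    IsDomSet A t 1 S ↔ ∀ w, ∃ v ∈ S, ∃ n < t, DReach A n v w := by
  simp only [IsDomSet, dreception, Nat.one_le_iff_ne_zero, ← Nat.pos_iff_ne_zero,
    Finset.sum_pos_iff, dsignal_pos_iff]

lemma isDomSet_univ (ht : 1 ≤ t) : IsDomSet A t 1 univ :=
  isDomSet_one_iff.2 fun w => ⟨w, mem_univ w, 0, ht, (rfl : w = w)⟩

lemma gamma_le_card {S : Finset V} (h : IsDomSet A t 1 S) : gamma A t 1 ≤ S.card :=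
  Nat.sInf_le ⟨S, h, rfl⟩

lemma exists_isDomSet_card_eq_gamma (ht : 1 ≤ t) :
    ∃ S : Finset V, IsDomSet A t 1 S ∧ S.card = gamma A t 1 :=
  Nat.sInf_mem (s := {k | ∃ S : Finset V, IsDomSet A t 1 S ∧ S.card = k})
    ⟨_, univ, isDomSet_univ ht, rfl⟩

end Domination

section ArcRemoval

variable {V : Type*} {A A' : V → V → Prop} {a c : V}

lemma DReach.mono_or_from_head (hAA' : ∀ u v, ¬(u = a ∧ v = c) → A u v → A' u v)
    {n : ℕ} {u w : V} (h : DReach A n u w) : DReach A' n u w ∨ ∃ m < n, DReach A' m c w := by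
  induction n generalizing u with
  | zero => exact Or.inl h
  | succ n ih =>
    obtain ⟨x, hux, hxw⟩ := h
    rcases ih hxw with hx | ⟨m, hm, hc⟩
    · by_cases harc : u = a ∧ x = c
      · obtain ⟨-, rfl⟩ := harc
        exact Or.inr ⟨n, n.lt_succ_self, hx⟩
      · exact Or.inl ⟨x, hAA' u x harc hux, hx⟩
    · exact Or.inr ⟨m, by omega, hc⟩

variable [Fintype V] {t : ℕ}

lemma IsDomSet.insert_head [DecidableEq V] (hAA' : ∀ u v, ¬(u = a ∧ v = c) → A u v → A' u v)
    {S : Finset V} (hS : IsDomSet A t 1 S) : IsDomSet A' t 1 (insert c S) := by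
  refine isDomSet_one_iff.2 fun w => ?_
  obtain ⟨v, hv, n, hnt, hn⟩ := isDomSet_one_iff.1 hS w
  rcases hn.mono_or_from_head hAA' with h | ⟨m, hm, h⟩
  · exact ⟨v, mem_insert_of_mem hv, n, hnt, h⟩
  · exact ⟨c, mem_insert_self c S, m, by omega, h⟩

lemma gamma_le_gamma_add_one (ht : 1 ≤ t)
    (hAA' : ∀ u v, ¬(u = a ∧ v = c) → A u v → A' u v) :
    gamma A' t 1 ≤ gamma A t 1 + 1 := by
  classical
  obtain ⟨S, hS, hcard⟩ := exists_isDomSet_card_eq_gamma (A := A) ht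
  calc gamma A' t 1 ≤ (insert c S).card := gamma_le_card (hS.insert_head hAA')
    _ ≤ S.card + 1 := card_insert_le c S
    _ = gamma A t 1 + 1 := by rw [hcard]

end ArcRemoval

section Orientation

variable {V : Type*} {G : SimpleGraph V} {A B : V → V → Prop}

def reverseArc (A : V → V → Prop) (a c u v : V) : Prop :=
  (u = c ∧ v = a) ∨ (A u v ∧ ¬(u = a ∧ v = c))

lemma IsOrientation.not_symm (hA : IsOrientation G A) {u v : V} (h : A u v) : ¬A v u :=
  (hA.2 u v (hA.1 u v h)).1 h

lemma IsOrientation.reverseArc (hA : IsOrientation G A) {a c : V} (hac : A a c) :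
    IsOrientation G (reverseArc A a c) := by
  have hadj : G.Adj a c := hA.1 a c hac
  have hca : ¬A c a := hA.not_symm hac
  refine ⟨?_, fun u v huv => ?_⟩
  · rintro u v (⟨rfl, rfl⟩ | ⟨h, -⟩)
    · exact hadj.symm
    · exact hA.1 u v h
  · have horient := hA.2 u v huv
    by_cases hac' : u = a ∧ v = c
    · obtain ⟨rfl, rfl⟩ := hac'
      simp [_root_.reverseArc, hadj.ne, hadj.ne.symm, hca, hac]
    · by_cases hca' : u = c ∧ v = a
      · obtain ⟨rfl, rfl⟩ := hca'
        simp [_root_.reverseArc, hadj.ne, hac]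
      · simp only [_root_.reverseArc, hac', hca', and_comm (a := v = _), and_true, false_or,
          not_false_eq_true]
        exact horient

lemma IsOrientation.eq_of_imp (hA : IsOrientation G A) (hB : IsOrientation G B)
    (hAB : ∀ u v, A u v → B u v) : A = B := by
  funext u v
  refine propext ⟨hAB u v, fun hBuv => ?_⟩
  by_contra hAuv
  have hAvu : A v u := by
    by_contra hAvu
    exact hAuv ((hA.2 u v (hB.1 u v hBuv)).2 hAvu)
  exact hB.not_symm hBuv (hAB v u hAvu)

open scoped Classical in
noncomputable def arcDiff [Fintype V] (A B : V → V → Prop) : Finset (V × V) :=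
  univ.filter fun p => A p.1 p.2 ∧ ¬B p.1 p.2

lemma mem_arcDiff [Fintype V] {p : V × V} : p ∈ arcDiff A B ↔ A p.1 p.2 ∧ ¬B p.1 p.2 := by
  simp [arcDiff]

lemma card_arcDiff_reverseArc_lt [Fintype V] {a c : V} (hac : A a c) (hBac : ¬B a c)
    (hBca : B c a) : (arcDiff (reverseArc A a c) B).card < (arcDiff A B).card := by
  classical
  have hmem : (a, c) ∈ arcDiff A B := mem_arcDiff.2 ⟨hac, hBac⟩
  refine lt_of_le_of_lt (card_le_card (t := (arcDiff A B).erase (a, c)) ?_)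
    (card_erase_lt_of_mem hmem)
  rintro ⟨u, v⟩ huv
  obtain ⟨⟨rfl, rfl⟩ | ⟨hAuv, hne⟩, hBuv⟩ := mem_arcDiff.1 huv
  · exact absurd hBca hBuv
  · exact mem_erase.2 ⟨fun h => hne (Prod.ext_iff.1 h), mem_arcDiff.2 ⟨hAuv, hBuv⟩⟩

variable [Fintype V] {t : ℕ}

lemma exists_orientation_gamma_eq (ht : 1 ≤ t) (hA : IsOrientation G A)
    (hB : IsOrientation G B) {b : ℕ} (hAb : gamma A t 1 ≤ b) (hbB : b ≤ gamma B t 1) :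
    ∃ C, IsOrientation G C ∧ gamma C t 1 = b := by
  classical
  induction hk : (arcDiff A B).card using Nat.strong_induction_on generalizing A with
  | _ k ih =>
  rcases hAb.eq_or_lt with hAb | hAb
  · exact ⟨A, hA, hAb⟩
  obtain ⟨a, c, hac, hBac⟩ : ∃ a c, A a c ∧ ¬B a c := by
    by_contra! hAB
    rw [hA.eq_of_imp hB hAB] at hAb
    omega
  have hBca : B c a := by
    by_contra hBca
    exact hBac ((hB.2 a c (hA.1 a c hac)).2 hBca)
  have hstep : gamma (reverseArc A a c) t 1 ≤ gamma A t 1 + 1 :=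
    gamma_le_gamma_add_one ht fun u v h huv => Or.inr ⟨huv, h⟩
  exact ih _ (hk ▸ card_arcDiff_reverseArc_lt hac hBac hBca) (hA.reverseArc hac)
    (by omega) rfl

end Orientation

theorem stmt1_general {V : Type*} [Fintype V] (G : SimpleGraph V)
    (t : ℕ) (ht : 1 ≤ t) (d D : ℕ)
    (hd : IsLeast {k : ℕ | ∃ A : V → V → Prop, IsOrientation G A ∧ gamma A t 1 = k} d)
    (hD : IsGreatest {k : ℕ | ∃ A : V → V → Prop, IsOrientation G A ∧ gamma A t 1 = k} D) :
    ∀ b : ℕ, d ≤ b → b ≤ D →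
      ∃ A : V → V → Prop, IsOrientation G A ∧ gamma A t 1 = b := by
  obtain ⟨⟨Amin, hAmin, rfl⟩, -⟩ := hd
  obtain ⟨⟨Amax, hAmax, rfl⟩, -⟩ := hD
  exact fun b hmin hmax => exists_orientation_gamma_eq ht hAmin hAmax hmin hmax

theorem stmt1 {V : Type*} [Fintype V] (G : SimpleGraph V) (hconn : G.Connected)
    (t : ℕ) (ht : 1 ≤ t) (d D : ℕ)
    (hd : IsLeast {k : ℕ | ∃ A : V → V → Prop, IsOrientation G A ∧ gamma A t 1 = k} d)
    (hD : IsGreatest {k : ℕ | ∃ A : V → V → Prop, IsOrientation G A ∧ gamma A t 1 = k} D) :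
    ∀ b : ℕ, d ≤ b → b ≤ D →
      ∃ A : V → V → Prop, IsOrientation G A ∧ gamma A t 1 = b :=
  stmt1_general G t ht d D hd hD
end

section
/- Let Ḡ be an orientation of the star S_n (n ≥ 3, with center c and n−1 leaves), and suppose exactly s leaves are sources (arcs directed toward the center). Then γ_{2,2}(Ḡ) = n if s ≤ 1, and γ_{2,2}(Ḡ) = n − 1 if s ≥ 2. -/
open Finset

section Aux

open scoped Classical

variable {V : Type*} (A : V → V → Prop)

lemma dsignal_self (w : V) : dsignal A 2 w w = 2 := by
  have hmem : 2 ∈ {m : ℕ | ∃ n : ℕ, DReach A n w w ∧ m = 2 - n} := ⟨0, rfl, rfl⟩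
  have hub : ∀ m ∈ {m : ℕ | ∃ n : ℕ, DReach A n w w ∧ m = 2 - n}, m ≤ 2 := by
    rintro m ⟨k, _, rfl⟩; exact Nat.sub_le _ _
  exact le_antisymm (csSup_le ⟨2, hmem⟩ hub) (le_csSup ⟨2, fun m hm => hub m hm⟩ hmem)

lemma dsignal_arc {v w : V} (hne : v ≠ w) (h : A v w) : dsignal A 2 v w = 1 := by
  have hmem : 1 ∈ {m : ℕ | ∃ n : ℕ, DReach A n v w ∧ m = 2 - n} :=
    ⟨1, ⟨w, h, rfl⟩, rfl⟩
  have hub : ∀ m ∈ {m : ℕ | ∃ n : ℕ, DReach A n v w ∧ m = 2 - n}, m ≤ 1 := by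
    rintro m ⟨k, hk, rfl⟩
    match k with
    | 0 => simp [DReach] at hk; exact absurd hk hne
    | k + 1 => omega
  exact le_antisymm (csSup_le ⟨1, hmem⟩ hub) (le_csSup ⟨1, fun m hm => hub m hm⟩ hmem)

lemma dsignal_zero {v w : V} (hne : v ≠ w) (h : ¬ A v w) : dsignal A 2 v w = 0 := by
  have hall : ∀ m ∈ {m : ℕ | ∃ n : ℕ, DReach A n v w ∧ m = 2 - n}, m = 0 := by
    rintro m ⟨k, hk, rfl⟩
    match k with
    | 0 => simp [DReach] at hk; exact absurd hk hne
    | 1 => simp [DReach] at hk; exact absurd hk h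
    | k + 2 => omega
  rcases Set.eq_empty_or_nonempty {m : ℕ | ∃ n : ℕ, DReach A n v w ∧ m = 2 - n} with he | hne'
  · unfold dsignal; rw [he]; exact csSup_empty
  · exact Nat.le_zero.mp (csSup_le hne' fun m hm => Nat.le_zero.mpr (hall m hm))

lemma dreception_le {V : Type*} [Fintype V] (A : V → V → Prop) (S : Finset V) (w : V)
    (hw : w ∉ S) : dreception A 2 S w ≤ (S.filter (fun v => A v w)).card := by
  classical
  unfold dreception
  calc ∑ v ∈ S, dsignal A 2 v w ≤ ∑ v ∈ S, (if A v w then 1 else 0) := by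
        apply Finset.sum_le_sum
        intro v hv
        have hne : v ≠ w := fun h => hw (h ▸ hv)
        by_cases h : A v w
        · rw [dsignal_arc A hne h, if_pos h]
        · rw [dsignal_zero A hne h, if_neg h]
    _ = (S.filter (fun v => A v w)).card := by
        rw [← Finset.sum_filter, Finset.sum_const, smul_eq_mul, mul_one]

end Aux

theorem stmt9 (n : ℕ) (hn : 3 ≤ n) (c : Fin n) (hc : c.val = 0)
    (A : Fin n → Fin n → Prop) (hA : IsOrientation (starGraph n) A)
    (s : ℕ) (hs : s = Set.ncard {v : Fin n | v ≠ c ∧ A v c}) :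
    (s ≤ 1 → gamma A 2 2 = n) ∧ (2 ≤ s → gamma A 2 2 = n - 1) := by
  classical
  have hA1 := hA.1
  have hcval : ∀ v : Fin n, v.val = 0 → v = c := fun v hv => Fin.ext (by rw [hv, hc])
  have hAc : ∀ v, A v c → v ≠ c := by
    intro v hv h
    have hadj := hA1 v c hv
    rw [h] at hadj
    exact (starGraph n).irrefl hadj
  have hscard : s = (univ.filter (fun v => A v c)).card := by
    rw [hs, ← Set.ncard_coe_finset]
    congr 1
    ext v
    simp only [Finset.coe_filter, Set.mem_setOf_eq, mem_univ, true_and]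
    exact ⟨fun h => h.2, fun h => ⟨hAc v h, h⟩⟩
  have hleaf : ∀ S : Finset (Fin n), IsDomSet A 2 2 S → ∀ w, w ≠ c → w ∈ S := by
    intro S hS w hw
    by_contra hwS
    have h1 := hS w
    have h2 := dreception_le A S w hwS
    have h3 : S.filter (fun v => A v w) ⊆ {c} := by
      intro v hv
      rw [Finset.mem_singleton]
      have hAvw := (Finset.mem_filter.mp hv).2
      have hadj := hA1 v w hAvw
      rcases hadj.2 with h0 | h0
      · exact hcval v h0
      · exact absurd (hcval w h0) hw
    have h4 := Finset.card_le_card h3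
    simp only [Finset.card_singleton] at h4
    omega
  have hudom : ∀ S : Finset (Fin n), (∀ w, w ∈ S) → IsDomSet A 2 2 S := by
    intro S hSall w
    unfold dreception
    calc 2 = dsignal A 2 w w := (dsignal_self A w).symm
      _ ≤ ∑ v ∈ S, dsignal A 2 v w :=
        Finset.single_le_sum (f := fun v => dsignal A 2 v w)
          (fun i _ => Nat.zero_le _) (hSall w)
  constructor
  · intro hs1
    have hall : ∀ S : Finset (Fin n), IsDomSet A 2 2 S → S = univ := by
      intro S hS
      apply Finset.eq_univ_iff_forall.mpr
      intro w
      by_cases hw : w = c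
      · subst hw
        by_contra hwS
        have h1 := hS w
        have h2 := dreception_le A S w hwS
        have h3 : S.filter (fun v => A v w) ⊆ univ.filter (fun v => A v w) :=
          Finset.filter_subset_filter _ (Finset.subset_univ S)
        have h4 := Finset.card_le_card h3
        omega
      · exact hleaf S hS w hw
    have hmemn : n ∈ {k : ℕ | ∃ S : Finset (Fin n), IsDomSet A 2 2 S ∧ S.card = k} :=
      ⟨univ, hudom univ (fun w => mem_univ w), by simp⟩
    unfold gamma
    apply le_antisymm (Nat.sInf_le hmemn)
    apply le_csInf ⟨n, hmemn⟩
    rintro k ⟨S, hS, rfl⟩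
    rw [hall S hS]
    simp
  · intro hs2
    have h2card : 1 < (univ.filter (fun v => A v c)).card := by omega
    obtain ⟨a, ha, b, hb, hab⟩ := Finset.one_lt_card.mp h2card
    have haA : A a c := (Finset.mem_filter.mp ha).2
    have hbA : A b c := (Finset.mem_filter.mp hb).2
    have hdom : IsDomSet A 2 2 (univ.erase c) := by
      intro w
      by_cases hw : w = c
      · rw [hw]
        have hsub : ({a, b} : Finset (Fin n)) ⊆ univ.erase c := by
          intro x hx
          simp only [Finset.mem_insert, Finset.mem_singleton] at hx
          rcases hx with h | h
          · rw [h]; exact Finset.mem_erase.mpr ⟨hAc a haA, mem_univ a⟩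
          · rw [h]; exact Finset.mem_erase.mpr ⟨hAc b hbA, mem_univ b⟩
        have hsum : dsignal A 2 a c + dsignal A 2 b c ≤ dreception A 2 (univ.erase c) c := by
          unfold dreception
          rw [← Finset.sum_pair (f := fun v => dsignal A 2 v c) hab]
          exact Finset.sum_le_sum_of_subset hsub
        rw [dsignal_arc A (hAc a haA) haA, dsignal_arc A (hAc b hbA) hbA] at hsum
        exact hsum
      · have hwmem : w ∈ univ.erase c := Finset.mem_erase.mpr ⟨hw, mem_univ w⟩
        unfold dreception
        calc 2 = dsignal A 2 w w := (dsignal_self A w).symm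
          _ ≤ ∑ v ∈ univ.erase c, dsignal A 2 v w :=
            Finset.single_le_sum (f := fun v => dsignal A 2 v w)
              (fun i _ => Nat.zero_le _) hwmem
    have hcard : (univ.erase c).card = n - 1 := by
      rw [Finset.card_erase_of_mem (mem_univ c)]
      simp
    have hmem : n - 1 ∈ {k : ℕ | ∃ S : Finset (Fin n), IsDomSet A 2 2 S ∧ S.card = k} :=
      ⟨_, hdom, hcard⟩
    unfold gamma
    apply le_antisymm (Nat.sInf_le hmem)
    apply le_csInf ⟨_, hmem⟩
    rintro k ⟨S, hS, rfl⟩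
    have hsub : univ.erase c ⊆ S := fun v hv => hleaf S hS v (Finset.mem_erase.mp hv).1
    calc n - 1 = (univ.erase c).card := hcard.symm
      _ ≤ S.card := Finset.card_le_card hsub
end

section
/- There exists an orientation of the infinite grid ℤ×ℤ and a set S of broadcasting vertices of density 1/3 that forms an efficient directed (2,2) broadcast dominating set: S consists of every third column together with an appropriate orientation so every vertex outside S has exactly two broadcasting in-neighbors. -/
/-- Adjacency in the infinite grid graph `ℤ × ℤ`. -/
def gridAdj (p q : ℤ × ℤ) : Prop := |p.1 - q.1| + |p.2 - q.2| = 1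

/-- `A` is an orientation of the infinite grid graph. -/
def IsOrientationZ (A : ℤ × ℤ → ℤ × ℤ → Prop) : Prop :=
  (∀ u v, A u v → gridAdj u v) ∧ ∀ u v, gridAdj u v → (A u v ↔ ¬ A v u)

/-- The directed `(2,2)` reception at `w` from broadcast set `S`: a broadcast vertex of
strength 2 gives itself signal 2 and each of its out-neighbors signal 1. -/
noncomputable def rec22 (A : ℤ × ℤ → ℤ × ℤ → Prop) (S : Set (ℤ × ℤ)) (w : ℤ × ℤ) : ℕ :=
  S.indicator (fun _ => 2) w + Set.ncard {v : ℤ × ℤ | v ∈ S ∧ A v w}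

/-- `S` is a directed `(2,2)` broadcast dominating set of the oriented grid `A`. -/
def IsDom22 (A : ℤ × ℤ → ℤ × ℤ → Prop) (S : Set (ℤ × ℤ)) : Prop :=
  ∀ w, 2 ≤ rec22 A S w

/-- `S` is efficient (for `t = r = 2`): every vertex outside `S` has reception exactly 2. -/
def IsEff22 (A : ℤ × ℤ → ℤ × ℤ → Prop) (S : Set (ℤ × ℤ)) : Prop :=
  ∀ w ∉ S, rec22 A S w = 2

/-- `S ⊆ ℤ × ℤ` has density `d`. -/
def HasDensity (S : Set (ℤ × ℤ)) (d : ℝ) : Prop :=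
  Filter.Tendsto
    (fun n : ℕ =>
      (Set.ncard (S ∩ Set.Icc (-(n : ℤ)) (n : ℤ) ×ˢ Set.Icc (-(n : ℤ)) (n : ℤ)) : ℝ) /
        ((2 * (n : ℝ) + 1) ^ 2))
    Filter.atTop (nhds d)

/-!
Take `S` to be the vertices `(x, y)` with `x + y ≡ 0 (mod 3)` and orient every edge from the
smaller to the larger residue of `x + y` mod 3; adjacent vertices have different residues, so
this is an orientation in which every vertex of `S` is a source. A vertex with residue 1 has
exactly two neighbours in `S`, namely `(x - 1, y)` and `(x, y - 1)`, and one with residue 2 has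
`(x + 1, y)` and `(x, y + 1)`; hence every vertex outside `S` receives signal exactly 2. In each
row of the box `[-n, n]²` the number of points of `S` is within `2/3` of `(2n + 1)/3`, which
gives density `1/3`. (Every third column would not do: a vertex beside a column of `S` has only
one neighbour in `S`.)
-/

open Finset Filter Topology

lemma gridAdj_iff {p q : ℤ × ℤ} : gridAdj p q ↔
    (p.1 = q.1 + 1 ∧ p.2 = q.2) ∨ (p.1 = q.1 - 1 ∧ p.2 = q.2) ∨
    (p.1 = q.1 ∧ p.2 = q.2 + 1) ∨ (p.1 = q.1 ∧ p.2 = q.2 - 1) := by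
  rw [gridAdj, Int.abs_eq_natAbs, Int.abs_eq_natAbs]
  omega

lemma gridAdj_comm (p q : ℤ × ℤ) : gridAdj p q ↔ gridAdj q p := by
  simp only [gridAdj, abs_sub_comm]

def orientBy (f : ℤ × ℤ → ℤ) (u v : ℤ × ℤ) : Prop :=
  gridAdj u v ∧ f u < f v

lemma isOrientationZ_orientBy {f : ℤ × ℤ → ℤ} (hf : ∀ u v, gridAdj u v → f u ≠ f v) :
    IsOrientationZ (orientBy f) := by
  refine ⟨fun _ _ h => h.1, fun u v h => ?_⟩
  simp only [orientBy, h, (gridAdj_comm u v).1 h, true_and, not_lt]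
  exact (hf u v h).le_iff_lt.symm

lemma isEff22_of_ncard_eq_two {A : ℤ × ℤ → ℤ × ℤ → Prop} {S : Set (ℤ × ℤ)}
    (h : ∀ w ∉ S, Set.ncard {v : ℤ × ℤ | v ∈ S ∧ A v w} = 2) : IsEff22 A S := fun w hw => by
  rw [rec22, Set.indicator_of_notMem hw, h w hw]

lemma IsEff22.isDom22 {A : ℤ × ℤ → ℤ × ℤ → Prop} {S : Set (ℤ × ℤ)} (h : IsEff22 A S) :
    IsDom22 A S := fun w => by
  by_cases hw : w ∈ S
  · rw [rec22, Set.indicator_of_mem hw]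
    exact Nat.le_add_right _ _
  · exact (h w hw).ge

lemma hasDensity_of_abs_sub_le {S : Set (ℤ × ℤ)} {d C : ℝ}
    (h : ∀ n : ℕ, |(Set.ncard (S ∩ Set.Icc (-(n : ℤ)) (n : ℤ) ×ˢ Set.Icc (-(n : ℤ)) (n : ℤ)) : ℝ)
      - d * (2 * n + 1) ^ 2| ≤ C * (2 * n + 1)) :
    HasDensity S d := by
  have hside : Tendsto (fun n : ℕ => 2 * (n : ℝ) + 1) atTop atTop :=
    tendsto_atTop_add_const_right _ _ (tendsto_natCast_atTop_atTop.const_mul_atTop two_pos)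
  refine tendsto_iff_norm_sub_tendsto_zero.2
    (squeeze_zero (g := fun n : ℕ => C / (2 * n + 1)) (fun _ => norm_nonneg _) (fun n => ?_)
      (tendsto_const_nhds.div_atTop hside))
  have hpos : (0 : ℝ) < 2 * n + 1 := by positivity
  rw [Real.norm_eq_abs, div_sub' (by positivity), abs_div, abs_of_pos (pow_pos hpos 2),
    div_le_iff₀ (by positivity)]
  calc _ ≤ C * (2 * n + 1) := by simpa only [mul_comm d] using h n
    _ = C / (2 * n + 1) * (2 * n + 1) ^ 2 := by field_simp

lemma Ioc_filter_dvd_add_card {q : ℤ} (hq : 0 < q) {a b : ℤ} (hab : a ≤ b) (c : ℤ) :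
    (#{x ∈ Ioc a b | q ∣ x + c} : ℤ) = (b + c) / q - (a + c) / q := by
  have hmod : {x ∈ Ioc a b | q ∣ x + c} = {x ∈ Ioc a b | x ≡ -c [ZMOD q]} := by
    simp only [Int.modEq_iff_dvd, ← dvd_neg (b := -c - _), neg_sub, sub_neg_eq_add]
  have hfloor (z : ℤ) : ⌊((z : ℚ) - ((-c : ℤ) : ℚ)) / (q : ℚ)⌋ = (z + c) / q := by
    rw [Int.floor_div_cast_of_nonneg hq.le, ← Int.cast_sub, Int.floor_intCast, sub_neg_eq_add]
  rw [hmod, Int.Ioc_filter_modEq_card _ _ hq, hfloor, hfloor, max_eq_left]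
  exact sub_nonneg.2 (Int.ediv_le_ediv hq (by omega))

def diagS : Set (ℤ × ℤ) := {p | 3 ∣ p.1 + p.2}

def diagOrient : ℤ × ℤ → ℤ × ℤ → Prop := orientBy fun p => (p.1 + p.2) % 3

lemma isOrientationZ_diagOrient : IsOrientationZ diagOrient :=
  isOrientationZ_orientBy fun u v h => by rw [gridAdj_iff] at h; omega

lemma ncard_diagS_inNeighbors {w : ℤ × ℤ} (hw : w ∉ diagS) :
    Set.ncard {v : ℤ × ℤ | v ∈ diagS ∧ diagOrient v w} = 2 := by
  obtain ⟨x, y⟩ := w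
  simp only [diagS, Set.mem_ofPred_eq] at hw
  rw [Set.ncard_eq_two]
  rcases (by omega : (x + y) % 3 = 1 ∨ (x + y) % 3 = 2) with h | h
  · refine ⟨(x - 1, y), (x, y - 1), by simp, ?_⟩
    ext ⟨a, b⟩
    simp only [diagS, diagOrient, orientBy, gridAdj_iff, Set.mem_ofPred_eq, Set.mem_insert_iff,
      Set.mem_singleton_iff, Prod.ext_iff]
    omega
  · refine ⟨(x + 1, y), (x, y + 1), by simp, ?_⟩
    ext ⟨a, b⟩
    simp only [diagS, diagOrient, orientBy, gridAdj_iff, Set.mem_ofPred_eq, Set.mem_insert_iff,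
      Set.mem_singleton_iff, Prod.ext_iff]
    omega

lemma ncard_diagS_inter_box (n : ℕ) :
    (Set.ncard (diagS ∩ Set.Icc (-(n : ℤ)) (n : ℤ) ×ˢ Set.Icc (-(n : ℤ)) (n : ℤ)) : ℤ) =
      ∑ y ∈ Icc (-(n : ℤ)) n, ((y + n) / 3 - (y - n - 1) / 3) := by
  have hbox : diagS ∩ Set.Icc (-(n : ℤ)) (n : ℤ) ×ˢ Set.Icc (-(n : ℤ)) (n : ℤ) =
      ↑({p ∈ Icc (-(n : ℤ)) n ×ˢ Icc (-(n : ℤ)) n | 3 ∣ p.1 + p.2}) := by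
    ext p
    simp only [diagS, Set.mem_inter_iff, Set.mem_prod, Set.mem_Icc, Set.mem_ofPred_eq, coe_filter,
      mem_product, mem_Icc]
    tauto
  have hrow : Icc (-(n : ℤ)) n = Ioc (-(n : ℤ) - 1) n := by
    ext x
    simp only [mem_Icc, mem_Ioc]
    omega
  rw [hbox, Set.ncard_coe_finset, card_filter, sum_product_right, Nat.cast_sum]
  refine sum_congr rfl fun y _ => ?_
  rw [← card_filter, hrow, Ioc_filter_dvd_add_card three_pos (by omega)]
  ring_nf

lemma abs_three_mul_ncard_diagS_inter_box_sub_le (n : ℕ) :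
    |3 * (Set.ncard (diagS ∩ Set.Icc (-(n : ℤ)) (n : ℤ) ×ˢ Set.Icc (-(n : ℤ)) (n : ℤ)) : ℤ)
      - (2 * (n : ℤ) + 1) ^ 2| ≤ 2 * (2 * (n : ℤ) + 1) := by
  have hside : (#(Icc (-(n : ℤ)) n) : ℤ) = 2 * n + 1 := by
    rw [Int.card_Icc]
    omega
  have hrow (y : ℤ) : |3 * ((y + n) / 3 - (y - n - 1) / 3) - (2 * n + 1)| ≤ 2 := by
    rw [abs_le]
    omega
  calc _ = |∑ y ∈ Icc (-(n : ℤ)) n, (3 * ((y + n) / 3 - (y - n - 1) / 3) - (2 * n + 1))| := by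
        rw [sum_sub_distrib, ← mul_sum, sum_const, nsmul_eq_mul, hside, ncard_diagS_inter_box, sq]
    _ ≤ ∑ _y ∈ Icc (-(n : ℤ)) n, 2 := (abs_sum_le_sum_abs _ _).trans (sum_le_sum fun y _ => hrow y)
    _ = 2 * (2 * n + 1) := by rw [sum_const, nsmul_eq_mul, hside, mul_comm]

lemma hasDensity_diagS : HasDensity diagS (1 / 3) :=
  hasDensity_of_abs_sub_le (C := 2 / 3) fun n => by
    have h : |3 * (Set.ncard (diagS ∩ Set.Icc (-(n : ℤ)) (n : ℤ) ×ˢ Set.Icc (-(n : ℤ)) (n : ℤ)) : ℝ)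
        - (2 * (n : ℝ) + 1) ^ 2| ≤ 2 * (2 * (n : ℝ) + 1) := by
      exact_mod_cast abs_three_mul_ncard_diagS_inter_box_sub_le n
    rw [abs_le] at h ⊢
    constructor <;> linarith

theorem stmt17 :
    ∃ (A : ℤ × ℤ → ℤ × ℤ → Prop) (S : Set (ℤ × ℤ)),
      IsOrientationZ A ∧ HasDensity S (1 / 3) ∧ IsDom22 A S ∧ IsEff22 A S ∧
      ∀ w ∉ S, Set.ncard {v : ℤ × ℤ | v ∈ S ∧ A v w} = 2 := by
  have heff : IsEff22 diagOrient diagS := isEff22_of_ncard_eq_two fun _ => ncard_diagS_inNeighbors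
  exact ⟨diagOrient, diagS, isOrientationZ_diagOrient, hasDensity_diagS, heff.isDom22, heff,
    fun _ => ncard_diagS_inNeighbors⟩
end
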